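/- Let u(r,θ) be a C⁶ function on an annular region, let v, w be C⁴ bounded functions there, and define U²(r,θ) = u(r,θ) + Δr²·v(r,θ) + Δθ²·w(r,θ). Define the deferred-correction operator H⁴₅ acting on u at (r,θ) by: [u(r+Δr,θ) − 2u(r,θ) + u(r−Δr,θ)]/Δr² + (1/r)[u(r+Δr,θ) − u(r−Δr,θ)]/(2Δr) + (1/r²)[u(r,θ+Δθ) − 2u(r,θ) + u(r,θ−Δθ)]/Δθ² + k²u(r,θ) − (Δr²/12)(D⁴ᵣU² + (2/r)D³ᵣU²)(r,θ) − (Δθ²/(12r²))(D⁴θU²)(r,θ), where D⁴ᵣ, D³ᵣ, D⁴θ are the centered second-order stencils for the fourth radial, third radial, and fourth angular derivatives with steps Δr and Δθ. Then H⁴₅u(r,θ) = u_rr + (1/r)u_r + (1/r²)u_θθ + k²u + O(Δr⁴) + O(Δθ⁴) + O(Δr²Δθ²). -/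

import Mathlib

/-!
Every difference quotient of the scheme is a five-point stencil `∑ⱼ cⱼ φ (a + mⱼ h)` divided by
a power of `h`. Expanding `φ` by Taylor's formula at `a`, such a stencil equals
`∑ᵢ (∑ⱼ cⱼ mⱼ ^ i) φ⁽ⁱ⁾(a) hⁱ / i!` up to `O(hⁿ)`, so only its discrete moments matter.
Subtracting `h²/12 · D⁴` from the three-point second difference, and `h²/6 · D³` from the
centred first difference, kills every moment below order six (resp. five) except the one that
reproduces the derivative; this gives the `O(Δr⁴)` and `O(Δθ⁴)` errors. The parts of `U`
coming from `Δr² v` and `Δθ² w` only enter through `D³` and `D⁴` of `C⁴` functions, which stay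
bounded, multiplied by `Δr⁴`, `Δr² Δθ²` or `Δθ⁴`.
-/

open Finset Filter Topology Asymptotics

theorem taylor_remainder_isBigO {f : ℝ → ℝ} {n : ℕ} (hf : ContDiff ℝ n f) (a : ℝ) :
    (fun h => f (a + h) - ∑ i ∈ range n, iteratedDeriv i f a * h ^ i / i.factorial)
      =O[𝓝 0] fun h => h ^ n := by
  have hto : Tendsto (fun h : ℝ => a + h) (𝓝 0) (𝓝 a) := by
    simpa using (continuous_const_add a).tendsto (0 : ℝ)
  have hlittle : (fun h => f (a + h) - taylorWithinEval f n Set.univ a (a + h)) =O[𝓝 0]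
      fun h => h ^ n := by
    simpa [Function.comp_def] using ((taylor_isLittleO_univ hf).comp_tendsto hto).isBigO
  have hlast : (fun h : ℝ => iteratedDeriv n f a / n.factorial * h ^ n) =O[𝓝 0]
      fun h => h ^ n :=
    (isBigO_refl _ _).const_mul_left _
  refine (hlittle.add hlast).congr_left fun h => ?_
  simp only [taylor_within_apply, iteratedDerivWithin_univ, smul_eq_mul, sum_range_succ,
    add_sub_cancel_left]
  rw [sum_congr rfl fun i _ => (by ring : ((i.factorial : ℝ))⁻¹ * h ^ i * iteratedDeriv i f a
    = iteratedDeriv i f a * h ^ i / i.factorial)]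
  ring

theorem stencil_sub_taylor_isBigO {ι : Type*} (s : Finset ι) (c m : ι → ℝ) {f : ℝ → ℝ}
    {n : ℕ} (hf : ContDiff ℝ n f) (a : ℝ) :
    (fun h => ∑ j ∈ s, c j * f (a + m j * h)
        - ∑ i ∈ range n, (∑ j ∈ s, c j * m j ^ i) * iteratedDeriv i f a / i.factorial * h ^ i)
      =O[𝓝 0] fun h => h ^ n := by
  have hnode : ∀ j ∈ s, (fun h => c j * (f (a + m j * h)
      - ∑ i ∈ range n, iteratedDeriv i f a * (m j * h) ^ i / i.factorial)) =O[𝓝 0]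
      fun h => h ^ n := by
    intro j _
    have hto : Tendsto (fun h : ℝ => m j * h) (𝓝 0) (𝓝 0) := by
      simpa using (continuous_const_mul (m j)).tendsto (0 : ℝ)
    refine (((taylor_remainder_isBigO hf a).comp_tendsto hto).trans ?_).const_mul_left (c j)
    simp only [Function.comp_def, mul_pow]
    exact (isBigO_refl _ _).const_mul_left _
  refine (IsBigO.sum hnode).congr_left fun h => ?_
  simp only [Finset.sum_apply, mul_sub, sum_sub_distrib, mul_sum]
  rw [sum_comm]
  congr 1
  refine sum_congr rfl fun i _ => ?_
  rw [sum_mul, sum_div, sum_mul]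
  exact sum_congr rfl fun j _ => by ring

theorem Asymptotics.IsBigO.div_pow_nhdsNE {f : ℝ → ℝ} {n p : ℕ}
    (hf : f =O[𝓝 0] fun h => h ^ (n + p)) :
    (fun h => f h / h ^ p) =O[𝓝[≠] 0] fun h => h ^ n := by
  refine ((hf.mono nhdsWithin_le_nhds).mul (isBigO_refl (fun h : ℝ => (h ^ p)⁻¹) _)).congr'
    (Eventually.of_forall fun h => div_eq_mul_inv _ _) ?_
  filter_upwards [self_mem_nhdsWithin] with h (hh : h ≠ 0)
  field_simp
  ring

noncomputable section

def secondDiff (φ : ℝ → ℝ) (a h : ℝ) : ℝ := (φ (a + h) - 2 * φ a + φ (a - h)) / h ^ 2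

def centralDiff (φ : ℝ → ℝ) (a h : ℝ) : ℝ := (φ (a + h) - φ (a - h)) / (2 * h)

def thirdDiff (φ : ℝ → ℝ) (a h : ℝ) : ℝ :=
  (-(1 / 2) * φ (a - 2 * h) + φ (a - h) - φ (a + h) + (1 / 2) * φ (a + 2 * h)) / h ^ 3

def fourthDiff (φ : ℝ → ℝ) (a h : ℝ) : ℝ :=
  (φ (a - 2 * h) - 4 * φ (a - h) + 6 * φ a - 4 * φ (a + h) + φ (a + 2 * h)) / h ^ 4

end

theorem secondDiff_sub_fourthDiff_isBigO {f : ℝ → ℝ} (hf : ContDiff ℝ 6 f) (a : ℝ) :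
    (fun h => secondDiff f a h - h ^ 2 / 12 * fourthDiff f a h - iteratedDeriv 2 f a)
      =O[𝓝[≠] 0] fun h => h ^ 4 := by
  refine ((stencil_sub_taylor_isBigO univ ![-1/12, 4/3, -5/2, 4/3, -1/12] ![-2, -1, 0, 1, 2]
    hf a).div_pow_nhdsNE (n := 4) (p := 2)).congr' ?_ EventuallyEq.rfl
  filter_upwards [self_mem_nhdsWithin] with h (hh : h ≠ 0)
  simp only [secondDiff, fourthDiff, Fin.sum_univ_five, sum_range_succ,
    sum_range_zero, Matrix.cons_val_zero, Matrix.cons_val_one, Matrix.cons_val, Nat.factorial,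
    iteratedDeriv_zero, iteratedDeriv_one]
  field_simp
  ring_nf

theorem centralDiff_sub_thirdDiff_isBigO {f : ℝ → ℝ} (hf : ContDiff ℝ 5 f) (a : ℝ) :
    (fun h => centralDiff f a h - h ^ 2 / 6 * thirdDiff f a h - deriv f a)
      =O[𝓝[≠] 0] fun h => h ^ 4 := by
  refine ((stencil_sub_taylor_isBigO univ ![1/12, -2/3, 0, 2/3, -1/12] ![-2, -1, 0, 1, 2]
    hf a).div_pow_nhdsNE (n := 4) (p := 1)).congr' ?_ EventuallyEq.rfl
  filter_upwards [self_mem_nhdsWithin] with h (hh : h ≠ 0)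
  simp only [centralDiff, thirdDiff, Fin.sum_univ_five, sum_range_succ,
    sum_range_zero, Matrix.cons_val_zero, Matrix.cons_val_one, Matrix.cons_val, Nat.factorial,
    iteratedDeriv_zero, iteratedDeriv_one]
  field_simp
  ring_nf

theorem thirdDiff_isBigO_one {f : ℝ → ℝ} (hf : ContDiff ℝ 3 f) (a : ℝ) :
    (fun h => thirdDiff f a h) =O[𝓝[≠] 0] fun _ => (1 : ℝ) := by
  refine ((stencil_sub_taylor_isBigO univ ![-1/2, 1, 0, -1, 1/2] ![-2, -1, 0, 1, 2]
    hf a).div_pow_nhdsNE (n := 0) (p := 3)).congr (fun h => ?_) pow_zero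
  simp only [thirdDiff, Fin.sum_univ_five, sum_range_succ,
    sum_range_zero, Matrix.cons_val_zero, Matrix.cons_val_one, Matrix.cons_val, Nat.factorial,
    iteratedDeriv_zero, iteratedDeriv_one]
  ring_nf

theorem fourthDiff_isBigO_one {f : ℝ → ℝ} (hf : ContDiff ℝ 4 f) (a : ℝ) :
    (fun h => fourthDiff f a h) =O[𝓝[≠] 0] fun _ => (1 : ℝ) := by
  refine ((stencil_sub_taylor_isBigO univ ![1, -4, 6, -4, 1] ![-2, -1, 0, 1, 2]
    hf a).div_pow_nhdsNE (n := 0) (p := 4)).congr (fun h => ?_) pow_zero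
  simp only [fourthDiff, Fin.sum_univ_five, sum_range_succ,
    sum_range_zero, Matrix.cons_val_zero, Matrix.cons_val_one, Matrix.cons_val, Nat.factorial,
    iteratedDeriv_zero, iteratedDeriv_one]
  ring_nf

noncomputable section

def polarHelmholtz (u : ℝ × ℝ → ℝ) (k r θ : ℝ) : ℝ :=
  iteratedDeriv 2 (fun s => u (s, θ)) r + (1 / r) * deriv (fun s => u (s, θ)) r
    + (1 / r ^ 2) * iteratedDeriv 2 (fun t => u (r, t)) θ + k ^ 2 * u (r, θ)

/-- The operator `H⁴₅` of the paper, applied to `u` with the correction `U = U²`. -/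
def deferredCorrectionScheme (u v w : ℝ × ℝ → ℝ) (k r θ Δr Δθ : ℝ) : ℝ :=
  let U : ℝ × ℝ → ℝ := fun p => u p + Δr ^ 2 * v p + Δθ ^ 2 * w p
  secondDiff (fun s => u (s, θ)) r Δr + (1 / r) * centralDiff (fun s => u (s, θ)) r Δr
    + (1 / r ^ 2) * secondDiff (fun t => u (r, t)) θ Δθ + k ^ 2 * u (r, θ)
    - Δr ^ 2 / 12 * (fourthDiff (fun s => U (s, θ)) r Δr
      + 2 / r * thirdDiff (fun s => U (s, θ)) r Δr)
    - Δθ ^ 2 / (12 * r ^ 2) * fourthDiff (fun t => U (r, t)) θ Δθ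

end

section

variable (l : Filter (ℝ × ℝ))

theorem isBigO_fst_pow_four :
    (fun x : ℝ × ℝ => x.1 ^ 4) =O[l] fun x => x.1 ^ 4 + x.2 ^ 4 + x.1 ^ 2 * x.2 ^ 2 :=
  isBigO_of_le _ fun x => by
    rw [Real.norm_of_nonneg (by positivity), Real.norm_of_nonneg (by positivity)]
    linarith [pow_two_nonneg (x.2 ^ 2), pow_two_nonneg (x.1 * x.2)]

theorem isBigO_snd_pow_four :
    (fun x : ℝ × ℝ => x.2 ^ 4) =O[l] fun x => x.1 ^ 4 + x.2 ^ 4 + x.1 ^ 2 * x.2 ^ 2 :=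
  isBigO_of_le _ fun x => by
    rw [Real.norm_of_nonneg (by positivity), Real.norm_of_nonneg (by positivity)]
    linarith [pow_two_nonneg (x.1 ^ 2), pow_two_nonneg (x.1 * x.2)]

theorem isBigO_fst_sq_mul_snd_sq :
    (fun x : ℝ × ℝ => x.1 ^ 2 * x.2 ^ 2) =O[l] fun x => x.1 ^ 4 + x.2 ^ 4 + x.1 ^ 2 * x.2 ^ 2 :=
  isBigO_of_le _ fun x => by
    rw [Real.norm_of_nonneg (by positivity), Real.norm_of_nonneg (by positivity)]
    linarith [pow_two_nonneg (x.1 ^ 2), pow_two_nonneg (x.2 ^ 2)]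

end

theorem deferredCorrectionScheme_sub_polarHelmholtz_isBigO {u v w : ℝ × ℝ → ℝ}
    (hu : ContDiff ℝ 6 u) (hv : ContDiff ℝ 4 v) (hw : ContDiff ℝ 4 w) (k r θ : ℝ) :
    (fun x : ℝ × ℝ => deferredCorrectionScheme u v w k r θ x.1 x.2 - polarHelmholtz u k r θ)
      =O[𝓝[≠] 0 ×ˢ 𝓝[≠] 0] fun x => x.1 ^ 4 + x.2 ^ 4 + x.1 ^ 2 * x.2 ^ 2 := by
  set l := 𝓝[≠] (0 : ℝ) ×ˢ 𝓝[≠] (0 : ℝ)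
  have hS₁ := isBigO_fst_pow_four l
  have hS₂ := isBigO_snd_pow_four l
  have hS₁₂ := isBigO_fst_sq_mul_snd_sq l
  have hrad {n : ℕ} {φ : ℝ × ℝ → ℝ} (hφ : ContDiff ℝ n φ) : ContDiff ℝ n fun s => φ (s, θ) :=
    hφ.comp₂ contDiff_id contDiff_const
  have hang {n : ℕ} {φ : ℝ × ℝ → ℝ} (hφ : ContDiff ℝ n φ) : ContDiff ℝ n fun t => φ (r, t) :=
    hφ.comp₂ contDiff_const contDiff_id
  have hfst {F g : ℝ → ℝ} (h : F =O[𝓝[≠] 0] g) : (fun x : ℝ × ℝ => F x.1) =O[l] fun x => g x.1 :=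
    h.comp_tendsto tendsto_fst
  have hsnd {F g : ℝ → ℝ} (h : F =O[𝓝[≠] 0] g) : (fun x : ℝ × ℝ => F x.2) =O[l] fun x => g x.2 :=
    h.comp_tendsto tendsto_snd
  have err_rr := (hfst (secondDiff_sub_fourthDiff_isBigO (hrad hu) r)).trans hS₁
  have err_r := ((hfst (centralDiff_sub_thirdDiff_isBigO (hrad (hu.of_le (by norm_num))) r)).trans
    hS₁).const_mul_left r⁻¹
  have err_θθ := ((hsnd (secondDiff_sub_fourthDiff_isBigO (hang hu) θ)).trans hS₂).const_mul_left
    (r ^ 2)⁻¹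
  have corr_r4 := (hS₁.mul (((hfst (fourthDiff_isBigO_one (hrad hv) r)).const_mul_left (1 / 12)).add
    ((hfst (thirdDiff_isBigO_one (hrad (hv.of_le (by norm_num))) r)).const_mul_left
      (1 / (6 * r))))).congr_right fun x => mul_one _
  have corr_r2θ2 := (hS₁₂.mul
    ((((hfst (fourthDiff_isBigO_one (hrad hw) r)).const_mul_left (1 / 12)).add
    ((hfst (thirdDiff_isBigO_one (hrad (hw.of_le (by norm_num))) r)).const_mul_left
      (1 / (6 * r)))).add
    ((hsnd (fourthDiff_isBigO_one (hang hv) θ)).const_mul_left (1 / (12 * r ^ 2))))).congr_right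
    fun x => mul_one _
  have corr_θ4 := (hS₂.mul ((hsnd (fourthDiff_isBigO_one (hang hw) θ)).const_mul_left
    (1 / (12 * r ^ 2)))).congr_right fun x => mul_one _
  refine (((((err_rr.add err_r).add err_θθ).sub corr_r4).sub corr_r2θ2).sub corr_θ4).congr_left
    fun x => ?_
  simp only [deferredCorrectionScheme, polarHelmholtz, secondDiff, centralDiff, thirdDiff,
    fourthDiff]
  ring

theorem exists_bound_of_isBigO_nhdsNE_prod {F G : ℝ × ℝ → ℝ}
    (h : F =O[𝓝[≠] 0 ×ˢ 𝓝[≠] 0] G) :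
    ∃ C δ : ℝ, 0 < δ ∧ ∀ x y, 0 < x → x < δ → 0 < y → y < δ →
      |F (x, y)| ≤ C * |G (x, y)| := by
  obtain ⟨C, hC⟩ := h.bound
  rw [← nhdsWithin_prod_eq, eventually_nhdsWithin_iff] at hC
  obtain ⟨δ, hδ, hball⟩ := Metric.eventually_nhds_iff.mp hC
  refine ⟨C, δ, hδ, fun x y hx hxδ hy hyδ => hball ?_ ⟨hx.ne', hy.ne'⟩⟩
  simp [Prod.dist_eq, abs_of_pos hx, abs_of_pos hy, hxδ, hyδ]

theorem stmt_6_general (u v w : ℝ × ℝ → ℝ) (r θ k : ℝ)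
    (hu : ContDiff ℝ 6 u) (hv : ContDiff ℝ 4 v) (hw : ContDiff ℝ 4 w) :
    ∃ C δ : ℝ, 0 < δ ∧ ∀ Δr Δθ : ℝ, 0 < Δr → Δr < δ → 0 < Δθ → Δθ < δ →
      let U : ℝ × ℝ → ℝ := fun p => u p + Δr ^ 2 * v p + Δθ ^ 2 * w p
      let D4r : ℝ := (U (r - 2*Δr, θ) - 4 * U (r - Δr, θ) + 6 * U (r, θ)
        - 4 * U (r + Δr, θ) + U (r + 2*Δr, θ)) / Δr ^ 4
      let D3r : ℝ := (-(1/2) * U (r - 2*Δr, θ) + U (r - Δr, θ)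
        - U (r + Δr, θ) + (1/2) * U (r + 2*Δr, θ)) / Δr ^ 3
      let D4θ : ℝ := (U (r, θ - 2*Δθ) - 4 * U (r, θ - Δθ) + 6 * U (r, θ)
        - 4 * U (r, θ + Δθ) + U (r, θ + 2*Δθ)) / Δθ ^ 4
      |((u (r + Δr, θ) - 2 * u (r, θ) + u (r - Δr, θ)) / Δr ^ 2
          + (1 / r) * (u (r + Δr, θ) - u (r - Δr, θ)) / (2 * Δr)
          + (1 / r ^ 2) * (u (r, θ + Δθ) - 2 * u (r, θ) + u (r, θ - Δθ)) / Δθ ^ 2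
          + k ^ 2 * u (r, θ)
          - (Δr ^ 2 / 12) * (D4r + (2 / r) * D3r)
          - (Δθ ^ 2 / (12 * r ^ 2)) * D4θ)
        - (iteratedDeriv 2 (fun s => u (s, θ)) r
          + (1 / r) * deriv (fun s => u (s, θ)) r
          + (1 / r ^ 2) * iteratedDeriv 2 (fun t => u (r, t)) θ
          + k ^ 2 * u (r, θ))|
      ≤ C * (Δr ^ 4 + Δθ ^ 4 + Δr ^ 2 * Δθ ^ 2) := by
  obtain ⟨C, δ, hδ, hbound⟩ := exists_bound_of_isBigO_nhdsNE_prod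
    (deferredCorrectionScheme_sub_polarHelmholtz_isBigO hu hv hw k r θ)
  refine ⟨C, δ, hδ, fun Δr Δθ hr₀ hrδ hθ₀ hθδ => ?_⟩
  have h := hbound Δr Δθ hr₀ hrδ hθ₀ hθδ
  dsimp only at h
  rw [abs_of_nonneg (by positivity : (0 : ℝ) ≤ Δr ^ 4 + Δθ ^ 4 + Δr ^ 2 * Δθ ^ 2)] at h
  convert h using 2
  simp only [deferredCorrectionScheme, polarHelmholtz, secondDiff, centralDiff, thirdDiff,
    fourthDiff]
  ring

theorem stmt_6 (u v w : ℝ × ℝ → ℝ) (r θ k : ℝ) (hr : 0 < r)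
    (hu : ContDiff ℝ 6 u) (hv : ContDiff ℝ 4 v) (hw : ContDiff ℝ 4 w)
    (hvb : ∃ M : ℝ, ∀ p, |v p| ≤ M) (hwb : ∃ M : ℝ, ∀ p, |w p| ≤ M) :
    ∃ C δ : ℝ, 0 < δ ∧ ∀ Δr Δθ : ℝ, 0 < Δr → Δr < δ → 0 < Δθ → Δθ < δ →
      let U : ℝ × ℝ → ℝ := fun p => u p + Δr ^ 2 * v p + Δθ ^ 2 * w p
      let D4r : ℝ := (U (r - 2*Δr, θ) - 4 * U (r - Δr, θ) + 6 * U (r, θ)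
        - 4 * U (r + Δr, θ) + U (r + 2*Δr, θ)) / Δr ^ 4
      let D3r : ℝ := (-(1/2) * U (r - 2*Δr, θ) + U (r - Δr, θ)
        - U (r + Δr, θ) + (1/2) * U (r + 2*Δr, θ)) / Δr ^ 3
      let D4θ : ℝ := (U (r, θ - 2*Δθ) - 4 * U (r, θ - Δθ) + 6 * U (r, θ)
        - 4 * U (r, θ + Δθ) + U (r, θ + 2*Δθ)) / Δθ ^ 4
      |((u (r + Δr, θ) - 2 * u (r, θ) + u (r - Δr, θ)) / Δr ^ 2
          + (1 / r) * (u (r + Δr, θ) - u (r - Δr, θ)) / (2 * Δr)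
          + (1 / r ^ 2) * (u (r, θ + Δθ) - 2 * u (r, θ) + u (r, θ - Δθ)) / Δθ ^ 2
          + k ^ 2 * u (r, θ)
          - (Δr ^ 2 / 12) * (D4r + (2 / r) * D3r)
          - (Δθ ^ 2 / (12 * r ^ 2)) * D4θ)
        - (iteratedDeriv 2 (fun s => u (s, θ)) r
          + (1 / r) * deriv (fun s => u (s, θ)) r
          + (1 / r ^ 2) * iteratedDeriv 2 (fun t => u (r, t)) θ
          + k ^ 2 * u (r, θ))|
      ≤ C * (Δr ^ 4 + Δθ ^ 4 + Δr ^ 2 * Δθ ^ 2) :=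
  stmt_6_general u v w r θ k hu hv hw
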